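/- arXiv:2308.00852 — 2 statements merged into one kernel-verified Lean document; each statement's English description precedes it below -/
import Mathlib

section
/- Consider two jobs with the same iteration time T, where job 1 has demand indicator B·1_{[a_1, b_1)} extended T-periodically, and job 2 has demand B·1_{[a_2, b_2)} extended T-periodically, with Up-phase lengths (b_1 − a_1) + (b_2 − a_2) ≤ T and B ≤ C < 2B. Then there exists a time-shift t ∈ [0, T) of job 2 such that for all x, demand(x) = B·1_{[a_1,b_1)}(x mod T) + B·1_{[a_2,b_2)}((x − t) mod T) ≤ C; i.e., the two jobs are fully compatible (compatibility score 1). -/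
/-- Two jobs with common iteration time `T`, having `T`-periodic indicator demands
`B·1_[a₁,b₁)` and `B·1_[a₂,b₂)` with total Up-phase length `(b₁-a₁)+(b₂-a₂) ≤ T`, and a
link capacity `C` with `B ≤ C < 2B`, are fully compatible: there is a time-shift
`t ∈ [0, T)` of the second job such that the summed demand never exceeds `C`. -/
theorem stmt8 (T a₁ b₁ a₂ b₂ B C : ℝ) (hT : 0 < T)
    (ha₁ : 0 ≤ a₁) (hab₁ : a₁ < b₁) (hb₁ : b₁ ≤ T)
    (ha₂ : 0 ≤ a₂) (hab₂ : a₂ < b₂) (hb₂ : b₂ ≤ T)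
    (hlen : (b₁ - a₁) + (b₂ - a₂) ≤ T)
    (hB : 0 < B) (hBC : B ≤ C) (hC2B : C < 2 * B) :
    ∃ t ∈ Set.Ico (0 : ℝ) T, ∀ x : ℝ,
      Set.indicator (Set.Ico a₁ b₁) (fun _ => B) (toIcoMod hT 0 x) +
      Set.indicator (Set.Ico a₂ b₂) (fun _ => B) (toIcoMod hT 0 (x - t)) ≤ C := by
  refine ⟨toIcoMod hT 0 (b₁ - a₂), toIcoMod_mem_Ico' hT _, fun x => ?_⟩
  set t := toIcoMod hT 0 (b₁ - a₂) with htdef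
  by_cases h1 : toIcoMod hT 0 x ∈ Set.Ico a₁ b₁
  · by_cases h2 : toIcoMod hT 0 (x - t) ∈ Set.Ico a₂ b₂
    · exfalso
      set m := toIcoDiv hT 0 x with hm
      set n := toIcoDiv hT 0 (x - t) with hn
      set k := toIcoDiv hT 0 (b₁ - a₂) with hk
      have hu : toIcoMod hT 0 x = x - m • T := rfl
      have hv : toIcoMod hT 0 (x - t) = (x - t) - n • T := rfl
      have hw : t = (b₁ - a₂) - k • T := rfl
      obtain ⟨hu1, hu2⟩ := h1
      obtain ⟨hv1, hv2⟩ := h2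
      rw [hu] at hu1 hu2
      rw [hv] at hv1 hv2
      rw [hw] at hv1 hv2
      have hms : (m : ℝ) • T = (m : ℝ) * T := by rw [smul_eq_mul]
      -- Let j = n - m - k; then u - v - (b₁ - a₂) = j * T
      have key : (x - m • T) - ((x - ((b₁ - a₂) - k • T)) - n • T) - (b₁ - a₂)
          = ((n - m - k : ℤ) : ℝ) * T := by
        push_cast
        rw [zsmul_eq_mul, zsmul_eq_mul, zsmul_eq_mul]
        ring
      set j : ℤ := n - m - k with hj
      have hlt0 : ((j : ℝ)) * T < 0 := by rw [← key]; linarith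
      have hgt : -T < ((j : ℝ)) * T := by rw [← key]; linarith
      have hjneg : j < 0 := by
        by_contra h
        push_neg at h
        have : (0 : ℝ) ≤ (j : ℝ) * T :=
          mul_nonneg (by exact_mod_cast h) hT.le
        linarith
      have : j ≤ -1 := by omega
      have : ((j : ℝ)) * T ≤ (-1) * T := by
        apply mul_le_mul_of_nonneg_right _ hT.le
        exact_mod_cast this
      linarith
    · rw [Set.indicator_of_mem h1, Set.indicator_of_notMem h2]
      simpa using hBC
  · rw [Set.indicator_of_notMem h1]
    by_cases h2 : toIcoMod hT 0 (x - t) ∈ Set.Ico a₂ b₂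
    · rw [Set.indicator_of_mem h2]; simpa using hBC
    · rw [Set.indicator_of_notMem h2]; simp; linarith
end

section
/- Let G = (U, V, E) be a finite bipartite graph (jobs and links). If G contains a cycle, then there exist edge weights w : E → ℤ and a modulus T ≥ 2 such that no assignment t : U → ℤ satisfies t_k ≡ t_j − w_{(j,l)} + w_{(l,k)} (mod T) for every link l and every pair of jobs j, k adjacent to l. Hence loop-freeness is necessary for Algorithm 1's correctness guarantee to hold for all weight assignments. -/
open SimpleGraph

private lemma walkSumAux {α : Type} {G : SimpleGraph α} (F : α → ZMod 2) {x y : α}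
    (p : G.Walk x y) :
    (p.edges.map (Sym2.lift ⟨fun a b => F a + F b, fun a b => add_comm _ _⟩)).sum
      = F x + F y := by
  induction p with
  | nil => simp [CharTwo.add_self_eq_zero]
  | @cons a b c h q ih =>
      simp only [SimpleGraph.Walk.edges_cons, List.map_cons, List.sum_cons, Sym2.lift_mk, ih]
      have h2 : F b + F b = 0 := CharTwo.add_self_eq_zero (R := ZMod 2) _
      linear_combination h2

private lemma indSumZero {α : Type} [DecidableEq α] (e₀ : α) :
    ∀ L : List α, e₀ ∉ L →
      (L.map (fun e => if e = e₀ then (1 : ZMod 2) else 0)).sum = 0 := by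
  intro L
  induction L with
  | nil => simp
  | cons a tl ih =>
      intro h
      simp only [List.mem_cons, not_or] at h
      simp [Ne.symm h.1 , ih h.2]

private lemma indSumOne {α : Type} [DecidableEq α] (e₀ : α) :
    ∀ L : List α, e₀ ∈ L → L.Nodup →
      (L.map (fun e => if e = e₀ then (1 : ZMod 2) else 0)).sum = 1 := by
  intro L
  induction L with
  | nil => simp
  | cons a tl ih =>
      intro hmem hnd
      rcases List.mem_cons.1 hmem with rfl | hmem'
      · have : e₀ ∉ tl := (List.nodup_cons.1 hnd).1
        simp [indSumZero e₀ tl this]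
      · have hne : a ≠ e₀ := by
          rintro rfl; exact (List.nodup_cons.1 hnd).1 hmem'
        simp [hne, ih hmem' (List.nodup_cons.1 hnd).2]

/-- If a bipartite job/link graph contains a cycle, then there are edge weights `w` and a
modulus `T ≥ 2` for which no time-shift assignment `t : U → ℤ` satisfies the consistency
congruences `t k ≡ t j - w (j,l) + w (l,k) (mod T)` for every link `l` and all pairs of
jobs `j, k` adjacent to `l`. Hence loop-freeness is necessary for the correctness
guarantee of Algorithm 1 to hold for all weight assignments. -/
theorem stmt19 {U V : Type} (G : SimpleGraph (U ⊕ V))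
    (hbU : ∀ u u' : U, ¬ G.Adj (Sum.inl u) (Sum.inl u'))
    (hbV : ∀ v v' : V, ¬ G.Adj (Sum.inr v) (Sum.inr v'))
    (hcyc : ¬ G.IsAcyclic) :
    ∃ (w : U → V → ℤ) (T : ℤ), 2 ≤ T ∧
      ¬ ∃ t : U → ℤ, ∀ (l : V) (j k : U),
        G.Adj (Sum.inl j) (Sum.inr l) → G.Adj (Sum.inl k) (Sum.inr l) →
        t k ≡ t j - w j l + w k l [ZMOD T] := by
  classical
  rw [SimpleGraph.IsAcyclic] at hcyc
  push_neg at hcyc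
  obtain ⟨v, p, hp⟩ := hcyc
  -- extract a first edge of the cycle
  cases p with
  | nil => exact absurd hp (by simp)
  | @cons _ b _ hadj q =>
    -- the first edge joins a job and a link
    obtain ⟨j₀, l₀, he₀⟩ :
        ∃ (j₀ : U) (l₀ : V), s(v, b) = s(Sum.inl j₀, Sum.inr l₀) ∧
          G.Adj (Sum.inl j₀) (Sum.inr l₀) := by
      rcases v with j | l <;> rcases b with j' | l'
      · exact absurd hadj (hbU _ _)
      · exact ⟨j, l', rfl, hadj⟩
      · exact ⟨j', l, Sym2.eq_swap, hadj.symm⟩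
      · exact absurd hadj (hbV _ _)
    set e₀ : Sym2 (U ⊕ V) := s(Sum.inl j₀, Sum.inr l₀) with he₀def
    refine ⟨fun j l => if j = j₀ ∧ l = l₀ then 1 else 0, 2, by norm_num, ?_⟩
    rintro ⟨t, H⟩
    set w : U → V → ℤ := fun j l => if j = j₀ ∧ l = l₀ then 1 else 0 with hw
    -- recast the hypothesis in `ZMod 2`
    have H2 : ∀ (l : V) (j k : U), G.Adj (Sum.inl j) (Sum.inr l) →
        G.Adj (Sum.inl k) (Sum.inr l) →
        ((t k : ZMod 2)) = (t j : ZMod 2) - (w j l : ZMod 2) + (w k l : ZMod 2) := by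
      intro l j k hj hk
      have := H l j k hj hk
      have h2 : ((t k : ℤ) : ZMod 2) = ((t j - w j l + w k l : ℤ) : ZMod 2) := by
        rw [ZMod.intCast_eq_intCast_iff]
        exact_mod_cast this
      push_cast at h2
      exact h2
    -- potential function
    set F : (U ⊕ V) → ZMod 2 := fun x =>
      match x with
      | Sum.inl j => (t j : ZMod 2)
      | Sum.inr l =>
          if h : ∃ j, G.Adj (Sum.inl j) (Sum.inr l) then
            ((t h.choose : ZMod 2) - (w h.choose l : ZMod 2)) else 0
      with hF
    -- the key local identity on any edge
    have key : ∀ (j : U) (l : V), G.Adj (Sum.inl j) (Sum.inr l) →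
        F (Sum.inl j) + F (Sum.inr l) = (w j l : ZMod 2) := by
      intro j l hjl
      have hex : ∃ j, G.Adj (Sum.inl j) (Sum.inr l) := ⟨j, hjl⟩
      have hspec := hex.choose_spec
      have hc := H2 l hex.choose j hspec hjl
      simp only [hF, hex, dif_pos]
      rw [hc]
      have h2 : ((t hex.choose : ZMod 2) - (w hex.choose l : ZMod 2))
          + ((t hex.choose : ZMod 2) - (w hex.choose l : ZMod 2)) = 0 :=
        CharTwo.add_self_eq_zero _
      linear_combination h2
    -- total sum around the cycle is zero
    set σ : Sym2 (U ⊕ V) → ZMod 2 :=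
      Sym2.lift ⟨fun a b => F a + F b, fun a b => add_comm _ _⟩ with hσ
    have hsum : (((Walk.cons hadj q).edges).map σ).sum = 0 := by
      rw [hσ, walkSumAux]
      exact CharTwo.add_self_eq_zero _
    -- but edge-wise, σ is the indicator of e₀
    have hind : ∀ e ∈ (Walk.cons hadj q).edges,
        σ e = if e = e₀ then (1 : ZMod 2) else 0 := by
      intro e hemem
      have hedge : e ∈ G.edgeSet := (Walk.cons hadj q).edges_subset_edgeSet hemem
      induction e using Sym2.ind with
      | _ a c =>
        rw [SimpleGraph.mem_edgeSet] at hedge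
        have hcast : ∀ (j : U) (l : V), ((w j l : ZMod 2))
            = if j = j₀ ∧ l = l₀ then (1 : ZMod 2) else 0 := by
          intro j l
          by_cases hjl : j = j₀ ∧ l = l₀ <;> simp [hw, hjl]
        rcases a with j | l <;> rcases c with j' | l'
        · exact absurd hedge (hbU _ _)
        · have : σ s(Sum.inl j, Sum.inr l') = (w j l' : ZMod 2) := by
            rw [hσ, Sym2.lift_mk]; exact key j l' hedge
          rw [this, hcast]
          congr 1
          simp only [he₀def, Sym2.eq_iff, eq_iff_iff]
          constructor
          · rintro ⟨rfl, rfl⟩; left; exact ⟨rfl, rfl⟩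
          · rintro (⟨h1, h2⟩ | ⟨h1, h2⟩)
            · exact ⟨Sum.inl.inj h1, Sum.inr.inj h2⟩
            · exact absurd h1 (by simp)
        · have : σ s(Sum.inr l, Sum.inl j') = (w j' l : ZMod 2) := by
            rw [hσ, Sym2.lift_mk]
            exact (add_comm (F (Sum.inr l)) (F (Sum.inl j'))).trans (key j' l hedge.symm)
          rw [this, hcast]
          congr 1
          simp only [he₀def, Sym2.eq_iff, eq_iff_iff]
          constructor
          · rintro ⟨rfl, rfl⟩; right; exact ⟨rfl, rfl⟩
          · rintro (⟨h1, h2⟩ | ⟨h1, h2⟩)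
            · exact absurd h1 (by simp)
            · exact ⟨Sum.inl.inj h2, Sum.inr.inj h1⟩
        · exact absurd hedge (hbV _ _)
    have hmapeq : (((Walk.cons hadj q).edges).map σ).sum
        = (((Walk.cons hadj q).edges).map (fun e => if e = e₀ then (1 : ZMod 2) else 0)).sum := by
      congr 1
      exact List.map_congr_left hind
    have hmem : e₀ ∈ (Walk.cons hadj q).edges := by
      rw [← he₀.1]
      simp [Walk.edges_cons]
    have hnd : ((Walk.cons hadj q).edges).Nodup := hp.edges_nodup
    have hone := indSumOne e₀ _ hmem hnd
    rw [hmapeq, hone] at hsum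
    exact one_ne_zero hsum
end
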